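/- Discrete-to-continuous universal simulation under smooth CDFs: Let {Δ_n} be non-increasing positive reals and {P_{X_n}} a sequence of Borel probability measures on ℝ whose CDFs F_{X_n} satisfy sup over x₁ with F_{X_n}(x₁+Δ_n) > F_{X_n}(x₁), sup over x ∈ (0, Δ_n] of |(F_{X_n}(x₁+x) − F_{X_n}(x₁))/(F_{X_n}(x₁+Δ_n) − F_{X_n}(x₁)) − x/Δ_n| → 0 as n → ∞. Then, with f_n(x) = G^{-1}((x − iΔ_n)/Δ_n) for x ∈ (iΔ_n, (i+1)Δ_n] and G the CDF of an arbitrary target Q_Y, the pushforwards satisfy |(f_n)_*P_{X_n} − Q_Y|_KS → 0. -/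

import Mathlib

/-!
Write `w(x) ∈ (0, 1]` for the rescaled position of `x` in its window `(iΔ, (i+1)Δ]`, so that the
sawtooth is `quantile ν ∘ w`. For `t ∈ [0, 1]` the set `{w ≤ t}` is the union of the initial
segments `(iΔ, iΔ + tΔ]` of the windows, and on each window the linearity defect `ε` of the CDF
of `μ` pins the mass of that segment to `(t ± ε)` times the mass of the window; summing over the
windows, `μ {w ≤ t}` is within `ε` of `t`, i.e. `w` pushes `μ` almost onto the uniform law.
Letting `t ↑ 1`, the grid `{w = 1}` has mass at most `ε`. Off the grid `w ∈ (0, 1)`, where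
`quantile ν s ≤ y ↔ s ≤ G y` with `G = cdfR ν`, so the preimage of `(-∞, y]` under the
sawtooth agrees with `{w ≤ G y}` outside the grid, and every CDF value is off by at most `2ε`.
-/

open MeasureTheory Set Filter

noncomputable def cdfR (μ : Measure ℝ) (x : ℝ) : ℝ := (μ (Set.Iic x)).toReal

noncomputable def KSdist (μ ν : Measure ℝ) : ℝ := ⨆ x : ℝ, |cdfR μ x - cdfR ν x|

noncomputable def quantile (ν : Measure ℝ) (t : ℝ) : ℝ := sInf {y : ℝ | t ≤ cdfR ν y}

/-- The sawtooth simulator at scale `Δ`. -/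
noncomputable def sawtooth (ν : Measure ℝ) (Δ : ℝ) (x : ℝ) : ℝ :=
  quantile ν ((x - ((⌈x / Δ⌉ : ℝ) - 1) * Δ) / Δ)

open Function

section FiniteMeasure

variable {α : Type*} [MeasurableSpace α] (μ : Measure α) [IsFiniteMeasure μ]

lemma hasSum_measureReal_iUnion {ι : Type*} [Countable ι] {s : ι → Set α}
    (hs : ∀ i, MeasurableSet (s i)) (hd : Pairwise (Disjoint on s)) :
    HasSum (fun i => μ.real (s i)) (μ.real (⋃ i, s i)) := by
  have hfin : ∑' i, μ (s i) ≠ ⊤ := by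
    rw [← measure_iUnion hd hs]
    exact measure_ne_top μ _
  rw [measureReal_def, measure_iUnion hd hs, ENNReal.tsum_toReal_eq fun i => measure_ne_top μ _]
  exact ENNReal.hasSum_toReal hfin

lemma abs_measureReal_sub_le_of_subset_union {s t u : Set α} (hst : s ⊆ t ∪ u)
    (hts : t ⊆ s ∪ u) : |μ.real s - μ.real t| ≤ μ.real u :=
  abs_sub_le_iff.mpr
    ⟨by linarith [measureReal_mono (μ := μ) hst, measureReal_union_le (μ := μ) t u],
     by linarith [measureReal_mono (μ := μ) hts, measureReal_union_le (μ := μ) s u]⟩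

end FiniteMeasure

section CDF

variable (μ : Measure ℝ)

lemma cdfR_eq_cdf [IsProbabilityMeasure μ] : cdfR μ = ProbabilityTheory.cdf μ :=
  funext fun x => (ProbabilityTheory.cdf_eq_real μ x).symm

lemma cdfR_mono [IsFiniteMeasure μ] : Monotone (cdfR μ) := fun _ _ hxy =>
  measureReal_mono (Iic_subset_Iic.mpr hxy)

lemma cdfR_mem_Icc [IsProbabilityMeasure μ] (x : ℝ) : cdfR μ x ∈ Icc 0 1 :=
  ⟨measureReal_nonneg, measureReal_le_one⟩

lemma measureReal_Ioc_eq_cdfR_sub [IsFiniteMeasure μ] {a b : ℝ} (hab : a ≤ b) :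
    μ.real (Ioc a b) = cdfR μ b - cdfR μ a := by
  rw [← Iic_sdiff_Iic, measureReal_sdiff (Iic_subset_Iic.mpr hab) measurableSet_Iic]
  rfl

lemma quantile_le_iff [IsProbabilityMeasure μ] {t y : ℝ} (ht : t ∈ Ioo 0 1) :
    quantile μ t ≤ y ↔ t ≤ cdfR μ y := by
  have hbdd : BddBelow {y | t ≤ cdfR μ y} := by
    rw [cdfR_eq_cdf]
    obtain ⟨z, hz⟩ := eventually_atBot.mp
      ((ProbabilityTheory.tendsto_cdf_atBot μ).eventually_lt_const ht.1)
    exact ⟨z, fun s hs => le_of_not_gt fun hsz => (hz s hsz.le).not_ge hs⟩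
  have hne : {y | t ≤ cdfR μ y}.Nonempty := by
    rw [cdfR_eq_cdf]
    exact (((ProbabilityTheory.tendsto_cdf_atTop μ).eventually_const_lt ht.2).mono
      fun _ h => h.le).exists
  refine ⟨fun h => ?_, fun h => csInf_le hbdd h⟩
  have hright : Tendsto (cdfR μ) (nhdsWithin y (Ioi y)) (nhds (cdfR μ y)) := by
    rw [cdfR_eq_cdf]
    exact ((ProbabilityTheory.cdf μ).right_continuous y).tendsto.mono_left
      (nhdsWithin_mono _ Ioi_subset_Ici_self)
  refine ge_of_tendsto hright (eventually_nhdsWithin_of_forall fun w hw => ?_)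
  obtain ⟨s, hs, hsw⟩ := exists_lt_of_csInf_lt hne (h.trans_lt hw)
  exact hs.trans (cdfR_mono μ hsw.le)

end CDF

noncomputable def windowPos (Δ x : ℝ) : ℝ := (x - ((⌈x / Δ⌉ : ℝ) - 1) * Δ) / Δ

lemma sawtooth_eq_comp (ν : Measure ℝ) (Δ : ℝ) : sawtooth ν Δ = quantile ν ∘ windowPos Δ := rfl

section WindowPos

variable {Δ : ℝ}

@[fun_prop]
lemma measurable_windowPos : Measurable (windowPos Δ) := by
  unfold windowPos
  fun_prop

lemma windowPos_mem_Ioc (hΔ : 0 < Δ) (x : ℝ) : windowPos Δ x ∈ Ioc 0 1 := by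
  have h1 : (⌈x / Δ⌉ : ℝ) < x / Δ + 1 := Int.ceil_lt_add_one _
  have h2 : x / Δ ≤ ⌈x / Δ⌉ := Int.le_ceil _
  have hx : x = x / Δ * Δ := (div_mul_cancel₀ x hΔ.ne').symm
  unfold windowPos
  constructor
  · apply div_pos _ hΔ
    nlinarith
  · rw [div_le_one hΔ]
    nlinarith

lemma preimage_windowPos_Iic (hΔ : 0 < Δ) {t : ℝ} (ht : t ≤ 1) :
    windowPos Δ ⁻¹' Iic t = ⋃ i : ℤ, Ioc (i * Δ) (i * Δ + t * Δ) := by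
  ext x
  simp only [mem_preimage, mem_Iic, mem_iUnion, mem_Ioc, windowPos, div_le_iff₀ hΔ]
  constructor
  · intro h
    refine ⟨⌈x / Δ⌉ - 1, ?_, by push_cast; linarith⟩
    have h1 : (⌈x / Δ⌉ : ℝ) < x / Δ + 1 := Int.ceil_lt_add_one _
    have hx : x = x / Δ * Δ := (div_mul_cancel₀ x hΔ.ne').symm
    push_cast
    nlinarith
  · rintro ⟨i, hi, hx⟩
    have hceil : ⌈x / Δ⌉ = i + 1 := by
      rw [Int.ceil_eq_iff, lt_div_iff₀ hΔ, div_le_iff₀ hΔ]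
      push_cast
      constructor <;> nlinarith
    rw [hceil]
    push_cast
    linarith

lemma pairwise_disjoint_Ioc_window (hΔ : 0 < Δ) {t : ℝ} (ht : t ≤ 1) :
    Pairwise (Disjoint on fun i : ℤ => Ioc (i * Δ) (i * Δ + t * Δ)) := by
  refine (pairwise_disjoint_Ioc_add_zsmul (0 : ℝ) Δ).mono fun i j h => h.mono ?_ ?_ <;>
  · refine Ioc_subset_Ioc (by simp [zsmul_eq_mul]) ?_
    simp only [zsmul_eq_mul, zero_add, Int.cast_add, Int.cast_one]
    nlinarith

end WindowPos

noncomputable def cdfLinearityDefect (μ : Measure ℝ) (Δ : ℝ) : ℝ :=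
  ⨆ x₁ : {x₁ : ℝ // cdfR μ x₁ < cdfR μ (x₁ + Δ)},
    ⨆ x : Set.Ioc (0 : ℝ) Δ,
      |(cdfR μ ((x₁ : ℝ) + (x : ℝ)) - cdfR μ (x₁ : ℝ)) /
          (cdfR μ ((x₁ : ℝ) + Δ) - cdfR μ (x₁ : ℝ)) - (x : ℝ) / Δ|

section Defect

variable (μ : Measure ℝ) {Δ : ℝ}

lemma cdfLinearityDefect_nonneg : 0 ≤ cdfLinearityDefect μ Δ :=
  Real.iSup_nonneg fun _ => Real.iSup_nonneg fun _ => abs_nonneg _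

variable [IsFiniteMeasure μ]

lemma abs_cdfR_ratio_sub_le_cdfLinearityDefect (hΔ : 0 < Δ) {x₁ x : ℝ}
    (hx₁ : cdfR μ x₁ < cdfR μ (x₁ + Δ)) (hx : x ∈ Ioc 0 Δ) :
    |(cdfR μ (x₁ + x) - cdfR μ x₁) / (cdfR μ (x₁ + Δ) - cdfR μ x₁) - x / Δ| ≤
      cdfLinearityDefect μ Δ := by
  have hle_one : ∀ (x₁ : {x₁ : ℝ // cdfR μ x₁ < cdfR μ (x₁ + Δ)}) (x : Ioc (0 : ℝ) Δ),
      |(cdfR μ ((x₁ : ℝ) + (x : ℝ)) - cdfR μ (x₁ : ℝ)) /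
          (cdfR μ ((x₁ : ℝ) + Δ) - cdfR μ (x₁ : ℝ)) - (x : ℝ) / Δ| ≤ 1 := by
    rintro ⟨x₁, hx₁⟩ ⟨x, hx0, hxΔ⟩
    have hW : 0 < cdfR μ (x₁ + Δ) - cdfR μ x₁ := sub_pos.mpr hx₁
    have hr0 : 0 ≤ (cdfR μ (x₁ + x) - cdfR μ x₁) / (cdfR μ (x₁ + Δ) - cdfR μ x₁) :=
      div_nonneg (sub_nonneg.mpr (cdfR_mono μ (by linarith))) hW.le
    have hr1 : (cdfR μ (x₁ + x) - cdfR μ x₁) / (cdfR μ (x₁ + Δ) - cdfR μ x₁) ≤ 1 :=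
      (div_le_one hW).mpr (by linarith [cdfR_mono μ (show x₁ + x ≤ x₁ + Δ by linarith)])
    have hs0 : 0 ≤ x / Δ := div_nonneg hx0.le hΔ.le
    have hs1 : x / Δ ≤ 1 := (div_le_one hΔ).mpr hxΔ
    exact abs_le.mpr ⟨by linarith, by linarith⟩
  refine le_ciSup_of_le ?_ ⟨x₁, hx₁⟩ (le_ciSup_of_le ?_ ⟨x, hx⟩ le_rfl)
  · exact ⟨1, by rintro _ ⟨x₁, rfl⟩; exact Real.iSup_le (hle_one x₁) zero_le_one⟩
  · exact ⟨1, by rintro _ ⟨x, rfl⟩; exact hle_one _ x⟩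

lemma abs_cdfR_window_sub_le (hΔ : 0 < Δ) (x₁ : ℝ) {t : ℝ} (ht : t ∈ Icc 0 1) :
    |cdfR μ (x₁ + t * Δ) - cdfR μ x₁ - t * (cdfR μ (x₁ + Δ) - cdfR μ x₁)| ≤
      cdfLinearityDefect μ Δ * (cdfR μ (x₁ + Δ) - cdfR μ x₁) := by
  have hmono : cdfR μ x₁ ≤ cdfR μ (x₁ + Δ) := cdfR_mono μ (by linarith)
  rcases ht.1.eq_or_lt with rfl | ht0
  · simpa using mul_nonneg (cdfLinearityDefect_nonneg μ) (sub_nonneg.mpr hmono)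
  rcases hmono.lt_or_eq with hlt | heq
  · have hW : 0 < cdfR μ (x₁ + Δ) - cdfR μ x₁ := sub_pos.mpr hlt
    have h := abs_cdfR_ratio_sub_le_cdfLinearityDefect μ hΔ hlt
      (x := t * Δ) ⟨by positivity, by nlinarith [ht.2]⟩
    rw [mul_div_cancel_right₀ t hΔ.ne'] at h
    calc |cdfR μ (x₁ + t * Δ) - cdfR μ x₁ - t * (cdfR μ (x₁ + Δ) - cdfR μ x₁)|
        = |(cdfR μ (x₁ + t * Δ) - cdfR μ x₁) / (cdfR μ (x₁ + Δ) - cdfR μ x₁) - t| *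
            (cdfR μ (x₁ + Δ) - cdfR μ x₁) := by
          rw [← abs_of_pos hW, ← abs_mul, abs_of_pos hW, sub_mul, div_mul_cancel₀ _ hW.ne']
      _ ≤ _ := mul_le_mul_of_nonneg_right h hW.le
  · have hflat : cdfR μ (x₁ + t * Δ) = cdfR μ x₁ :=
      le_antisymm (heq ▸ cdfR_mono μ (by nlinarith [ht.2]))
        (cdfR_mono μ (le_add_of_nonneg_right (by positivity)))
    simp [hflat, heq]

end Defect

section Simulation

variable (μ : Measure ℝ) [IsProbabilityMeasure μ] {Δ : ℝ}

lemma hasSum_cdfR_window (hΔ : 0 < Δ) {t : ℝ} (ht : t ∈ Icc 0 1) :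
    HasSum (fun i : ℤ => cdfR μ (i * Δ + t * Δ) - cdfR μ (i * Δ))
      (μ.real (windowPos Δ ⁻¹' Iic t)) := by
  simp_rw [← measureReal_Ioc_eq_cdfR_sub μ (le_add_of_nonneg_right (mul_nonneg ht.1 hΔ.le)),
    preimage_windowPos_Iic hΔ ht.2]
  exact hasSum_measureReal_iUnion μ (fun _ => measurableSet_Ioc)
    (pairwise_disjoint_Ioc_window hΔ ht.2)

lemma abs_measureReal_preimage_windowPos_Iic_sub_le (hΔ : 0 < Δ) {t : ℝ} (ht : t ∈ Icc 0 1) :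
    |μ.real (windowPos Δ ⁻¹' Iic t) - t| ≤ cdfLinearityDefect μ Δ := by
  have hW : HasSum (fun i : ℤ => cdfR μ (i * Δ + Δ) - cdfR μ (i * Δ)) 1 := by
    have h := hasSum_cdfR_window μ hΔ (t := 1) ⟨zero_le_one, le_rfl⟩
    rw [preimage_eq_univ_iff.mpr fun _ ⟨x, hx⟩ => hx ▸ (windowPos_mem_Ioc hΔ x).2,
      probReal_univ] at h
    simpa only [one_mul] using h
  have hdev := (hasSum_cdfR_window μ hΔ ht).sub (hW.mul_left t)
  have hbound := fun i : ℤ => abs_le.mp (abs_cdfR_window_sub_le μ hΔ (i * Δ) ht)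
  rw [mul_one] at hdev
  refine abs_le.mpr ⟨?_, ?_⟩
  · simpa using hasSum_le (fun i => (hbound i).1) (hW.mul_left _).neg hdev
  · simpa using hasSum_le (fun i => (hbound i).2) hdev (hW.mul_left _)

lemma measureReal_preimage_windowPos_one_le (hΔ : 0 < Δ) :
    μ.real (windowPos Δ ⁻¹' {1}) ≤ cdfLinearityDefect μ Δ := by
  refine le_of_forall_pos_le_add fun δ hδ => ?_
  rcases lt_or_ge δ 1 with hδ1 | hδ1
  · have hsub : windowPos Δ ⁻¹' {1} ⊆ (windowPos Δ ⁻¹' Iic (1 - δ))ᶜ := fun x hx => by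
      simp_all
    have h := abs_le.mp
      (abs_measureReal_preimage_windowPos_Iic_sub_le μ hΔ (t := 1 - δ) ⟨by linarith, by linarith⟩)
    have := measureReal_mono (μ := μ) hsub
    rw [probReal_compl_eq_one_sub (measurable_windowPos measurableSet_Iic)] at this
    linarith
  · linarith [cdfLinearityDefect_nonneg μ (Δ := Δ),
      measureReal_le_one (μ := μ) (s := windowPos Δ ⁻¹' {1})]

variable (ν : Measure ℝ) [IsProbabilityMeasure ν]

-- `quantile ν 1` is the junk value `sInf ∅ = 0` when `cdfR ν` never reaches `1`, so the grid
-- `windowPos Δ ⁻¹' {1}` has to be split off.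
lemma preimage_sawtooth_Iic (hΔ : 0 < Δ) (y : ℝ) :
    sawtooth ν Δ ⁻¹' Iic y =
      (windowPos Δ ⁻¹' Iic (cdfR ν y) \ windowPos Δ ⁻¹' {1}) ∪
        (windowPos Δ ⁻¹' {1} ∩ {_x | quantile ν 1 ≤ y}) := by
  ext x
  by_cases h1 : windowPos Δ x = 1
  · simp [sawtooth_eq_comp, h1]
  · have hmem : windowPos Δ x ∈ Ioo 0 1 :=
      ⟨(windowPos_mem_Ioc hΔ x).1, (windowPos_mem_Ioc hΔ x).2.lt_of_ne h1⟩
    simp [sawtooth_eq_comp, h1, quantile_le_iff ν hmem]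

lemma measurable_sawtooth (hΔ : 0 < Δ) : Measurable (sawtooth ν Δ) :=
  measurable_of_Iic fun y => by
    rw [preimage_sawtooth_Iic ν hΔ y]
    have hgrid := measurable_windowPos (Δ := Δ) (measurableSet_singleton 1)
    exact ((measurable_windowPos measurableSet_Iic).diff hgrid).union
      (hgrid.inter (MeasurableSet.const _))

lemma KSdist_map_sawtooth_le (hΔ : 0 < Δ) :
    KSdist (μ.map (sawtooth ν Δ)) ν ≤ 2 * cdfLinearityDefect μ Δ := by
  refine Real.iSup_le (fun y => ?_) (mul_nonneg zero_le_two (cdfLinearityDefect_nonneg μ))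
  have hcdf : cdfR (μ.map (sawtooth ν Δ)) y = μ.real (sawtooth ν Δ ⁻¹' Iic y) :=
    map_measureReal_apply (measurable_sawtooth ν hΔ) measurableSet_Iic
  have hgrid := abs_measureReal_sub_le_of_subset_union μ
    (s := sawtooth ν Δ ⁻¹' Iic y) (t := windowPos Δ ⁻¹' Iic (cdfR ν y))
    (u := windowPos Δ ⁻¹' {1})
    (by rw [preimage_sawtooth_Iic ν hΔ y]; grind) (by rw [preimage_sawtooth_Iic ν hΔ y]; grind)
  have hwindows := abs_measureReal_preimage_windowPos_Iic_sub_le μ hΔ (cdfR_mem_Icc ν y)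
  rw [hcdf]
  linarith [abs_sub_le (μ.real (sawtooth ν Δ ⁻¹' Iic y))
    (μ.real (windowPos Δ ⁻¹' Iic (cdfR ν y))) (cdfR ν y),
    measureReal_preimage_windowPos_one_le μ hΔ]

end Simulation

theorem universal_simulation_smooth_cdfs_general
    (Δ : ℕ → ℝ) (hΔpos : ∀ n, 0 < Δ n)
    (P : ℕ → Measure ℝ) (hP : ∀ n, IsProbabilityMeasure (P n))
    (hsmooth : Tendsto (fun n =>
        ⨆ x₁ : {x₁ : ℝ // cdfR (P n) x₁ < cdfR (P n) (x₁ + Δ n)},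
          ⨆ x : Set.Ioc (0 : ℝ) (Δ n),
            |(cdfR (P n) ((x₁ : ℝ) + (x : ℝ)) - cdfR (P n) (x₁ : ℝ)) /
                (cdfR (P n) ((x₁ : ℝ) + Δ n) - cdfR (P n) (x₁ : ℝ)) - (x : ℝ) / Δ n|)
      atTop (nhds 0))
    (Q : Measure ℝ) [IsProbabilityMeasure Q] :
    Tendsto (fun n => KSdist ((P n).map (sawtooth Q (Δ n))) Q) atTop (nhds 0) := by
  have hdefect : Tendsto (fun n => cdfLinearityDefect (P n) (Δ n)) atTop (nhds 0) := hsmooth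
  refine squeeze_zero (fun n => Real.iSup_nonneg fun _ => abs_nonneg _) (fun n => ?_)
    (by simpa using hdefect.const_mul 2)
  have := hP n
  exact KSdist_map_sawtooth_le (P n) Q (hΔpos n)

/-- Discrete-to-continuous universal simulation under asymptotically smooth CDFs:
if on every width-`Δₙ` window where the CDF increases, the normalized CDF increment is
uniformly close to linear, then the KS error of the sawtooth simulator vanishes. -/
theorem universal_simulation_smooth_cdfs
    (Δ : ℕ → ℝ) (hΔpos : ∀ n, 0 < Δ n) (hΔmono : ∀ m n, m ≤ n → Δ n ≤ Δ m)
    (P : ℕ → Measure ℝ) (hP : ∀ n, IsProbabilityMeasure (P n))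
    (hsmooth : Tendsto (fun n =>
        ⨆ x₁ : {x₁ : ℝ // cdfR (P n) x₁ < cdfR (P n) (x₁ + Δ n)},
          ⨆ x : Set.Ioc (0 : ℝ) (Δ n),
            |(cdfR (P n) ((x₁ : ℝ) + (x : ℝ)) - cdfR (P n) (x₁ : ℝ)) /
                (cdfR (P n) ((x₁ : ℝ) + Δ n) - cdfR (P n) (x₁ : ℝ)) - (x : ℝ) / Δ n|)
      atTop (nhds 0))
    (Q : Measure ℝ) [IsProbabilityMeasure Q] :
    Tendsto (fun n => KSdist ((P n).map (sawtooth Q (Δ n))) Q) atTop (nhds 0) :=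
  universal_simulation_smooth_cdfs_general Δ hΔpos P hP hsmooth Q
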